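/- Let f : [0, L] × 𝕋² → ℝ be in the mixed Sobolev space H^{α}_τ H^{β}_z with α, β > 0 and α + β < 1, where the H^α_τ norm uses the eigenbasis sin(π n₁ τ / L). Then for every δ > 0 there exists C such that ‖ d(τ, {0,L})^{-α} f ‖_{L²_τ H^β_z} ≤ C ‖f‖_{H^{α+β+δ}}, where d(τ, {0,L}) is the distance of τ to the endpoints. Moreover ‖f‖_{H^α_τ H^β_z} ≤ ‖f‖_{H^{α+β}}. -/
import Mathlib

open MeasureTheory
open Real Filter Set
open scoped ENNReal

lemma measurable_tsum_real {f : ℕ → ℝ → ℝ} (hf : ∀ i, Measurable (f i)) :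
    Measurable fun x => ∑' i, f i x := by
  have key : ∀ x, (∑' i, f i x) =
      (if (∑' i, ENNReal.ofReal |f i x|) < ⊤ then
        (∑' i, ENNReal.ofReal (f i x)).toReal - (∑' i, ENNReal.ofReal (-f i x)).toReal
      else 0) := by
    intro x
    by_cases h : Summable fun i => f i x
    · have habs : Summable fun i => |f i x| := h.abs
      have hlt : (∑' i, ENNReal.ofReal |f i x|) < ⊤ := by
        rw [← ENNReal.ofReal_tsum_of_nonneg (fun i => abs_nonneg _) habs]
        exact ENNReal.ofReal_lt_top
      rw [if_pos hlt]
      have hpos : Summable fun i => max (f i x) 0 :=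
        habs.of_nonneg_of_le (fun i => le_max_right _ _)
          (fun i => max_le (le_abs_self _) (abs_nonneg _))
      have hneg : Summable fun i => max (-f i x) 0 :=
        habs.of_nonneg_of_le (fun i => le_max_right _ _)
          (fun i => max_le (neg_le_abs _) (abs_nonneg _))
      have h1 : (∑' i, ENNReal.ofReal (f i x)) = ENNReal.ofReal (∑' i, max (f i x) 0) := by
        rw [ENNReal.ofReal_tsum_of_nonneg (fun i => le_max_right _ _) hpos]
        congr 1; ext i
        rcases le_total (f i x) 0 with hc | hc
        · rw [max_eq_right hc, ENNReal.ofReal_of_nonpos hc, ENNReal.ofReal_zero]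
        · rw [max_eq_left hc]
      have h2 : (∑' i, ENNReal.ofReal (-f i x)) = ENNReal.ofReal (∑' i, max (-f i x) 0) := by
        rw [ENNReal.ofReal_tsum_of_nonneg (fun i => le_max_right _ _) hneg]
        congr 1; ext i
        rcases le_total (-f i x) 0 with hc | hc
        · rw [max_eq_right hc, ENNReal.ofReal_of_nonpos hc, ENNReal.ofReal_zero]
        · rw [max_eq_left hc]
      rw [h1, h2, ENNReal.toReal_ofReal (tsum_nonneg fun i => le_max_right _ _),
        ENNReal.toReal_ofReal (tsum_nonneg fun i => le_max_right _ _), ← Summable.tsum_sub hpos hneg]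
      congr 1; ext i
      rcases le_total (f i x) 0 with hc | hc
      · rw [max_eq_right hc, max_eq_left (by linarith)]; ring
      · rw [max_eq_left hc, max_eq_right (by linarith)]; ring
    · rw [tsum_eq_zero_of_not_summable h]
      rw [if_neg]
      intro hlt
      apply h
      rw [← summable_abs_iff]
      have := ENNReal.summable_toReal hlt.ne
      simpa [ENNReal.toReal_ofReal (abs_nonneg _)] using this
  simp_rw [key]
  have m1 : Measurable fun x => (∑' i, ENNReal.ofReal |f i x|) :=
    Measurable.ennreal_tsum fun i => ((hf i).abs).ennreal_ofReal
  refine Measurable.ite (measurableSet_lt m1 measurable_const) ?_ measurable_const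
  exact ((Measurable.ennreal_tsum fun i => (hf i).ennreal_ofReal).ennreal_toReal).sub
    ((Measurable.ennreal_tsum fun i => (hf i).neg.ennreal_ofReal).ennreal_toReal)

lemma integral_cos_mul' (L c : ℝ) :
    ∫ x in (0:ℝ)..L, Real.cos (c*x) = if c = 0 then L else Real.sin (c*L)/c := by
  split_ifs with hc
  · simp [hc]
  · rw [intervalIntegral.integral_comp_mul_left (fun y => Real.cos y) hc]
    simp [integral_cos, div_eq_inv_mul]

lemma sin_orth (L : ℝ) (hL : 0 < L) (i j : ℕ) :
    ∫ τ in (0:ℝ)..L, Real.sin (Real.pi*((i:ℝ)+1)*τ/L) * Real.sin (Real.pi*((j:ℝ)+1)*τ/L)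
      = if i = j then L/2 else 0 := by
  set p : ℝ := Real.pi*((i:ℝ)+1)/L with hp
  set q : ℝ := Real.pi*((j:ℝ)+1)/L with hq
  have hL' : L ≠ 0 := hL.ne'
  have hconv : ∀ τ : ℝ, Real.sin (Real.pi*((i:ℝ)+1)*τ/L) * Real.sin (Real.pi*((j:ℝ)+1)*τ/L)
      = (1/2) * (Real.cos ((p-q)*τ) - Real.cos ((p+q)*τ)) := by
    intro τ
    have h1 : Real.pi*((i:ℝ)+1)*τ/L = p*τ := by rw [hp]; ring
    have h2 : Real.pi*((j:ℝ)+1)*τ/L = q*τ := by rw [hq]; ring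
    rw [h1, h2]
    have e1 : (p-q)*τ = p*τ - q*τ := by ring
    have e2 : (p+q)*τ = p*τ + q*τ := by ring
    rw [e1, e2, Real.cos_sub, Real.cos_add]; ring
  have hint : ∀ c : ℝ, IntervalIntegrable (fun τ => Real.cos (c*τ)) volume 0 L :=
    fun c => ((Real.continuous_cos.comp (continuous_const.mul continuous_id)).intervalIntegrable _ _)
  rw [intervalIntegral.integral_congr (fun τ _ => hconv τ)]
  rw [intervalIntegral.integral_const_mul, intervalIntegral.integral_sub (hint _) (hint _),
    integral_cos_mul', integral_cos_mul']
  have hpq2 : p + q ≠ 0 := by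
    have h1 : (0:ℝ) < p := by rw [hp]; positivity
    have h2 : (0:ℝ) < q := by rw [hq]; positivity
    linarith
  have hv2 : Real.sin ((p+q)*L) = 0 := by
    have hval : (p+q)*L = ((i + j + 2 : ℕ) : ℝ) * Real.pi := by
      rw [hp, hq]; push_cast; field_simp; ring
    rw [hval, Real.sin_nat_mul_pi]
  by_cases hij : i = j
  · subst hij
    have hpq : p - q = 0 := by rw [hp, hq]; ring
    rw [if_pos rfl, if_pos hpq, if_neg hpq2, hv2]
    ring
  · have hpq : p - q ≠ 0 := by
      rw [hp, hq]
      have hne : ((i:ℝ)+1) ≠ ((j:ℝ)+1) := by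
        simp only [ne_eq, add_left_inj, Nat.cast_inj]
        exact fun h => hij h
      rw [div_sub_div_same]
      refine div_ne_zero ?_ hL'
      rw [sub_ne_zero]
      exact fun h => hne (mul_left_cancel₀ Real.pi_ne_zero h)
    have hv1 : Real.sin ((p-q)*L) = 0 := by
      have hval : (p-q)*L = ((i:ℤ) - (j:ℤ) : ℤ) * Real.pi := by
        rw [hp, hq]; push_cast; field_simp; ring
      rw [hval, Real.sin_int_mul_pi]
    rw [if_neg hij, if_neg hpq, if_neg hpq2, hv1, hv2]
    ring

lemma finite_parseval (L : ℝ) (hL : 0 < L) (b : ℕ → ℝ) (s : Finset ℕ) :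
    ∫ τ in (0:ℝ)..L, (∑ k ∈ s, b k * Real.sin (Real.pi*((k:ℝ)+1)*τ/L))^2
      = (L/2) * ∑ k ∈ s, (b k)^2 := by
  have hcont : ∀ k : ℕ, Continuous fun τ => Real.sin (Real.pi*((k:ℝ)+1)*τ/L) := by
    intro k
    exact Real.continuous_sin.comp ((continuous_const.mul continuous_id).div_const L)
  have hexp : ∀ τ : ℝ, (∑ k ∈ s, b k * Real.sin (Real.pi*((k:ℝ)+1)*τ/L))^2
      = ∑ i ∈ s, ∑ j ∈ s, (b i * b j) *
        (Real.sin (Real.pi*((i:ℝ)+1)*τ/L) * Real.sin (Real.pi*((j:ℝ)+1)*τ/L)) := by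
    intro τ
    rw [sq, Finset.sum_mul_sum]
    apply Finset.sum_congr rfl; intro i _
    apply Finset.sum_congr rfl; intro j _
    ring
  rw [intervalIntegral.integral_congr (fun τ _ => hexp τ)]
  rw [intervalIntegral.integral_finset_sum]
  · have : ∀ i ∈ s, (∫ τ in (0:ℝ)..L, ∑ j ∈ s, (b i * b j) *
        (Real.sin (Real.pi*((i:ℝ)+1)*τ/L) * Real.sin (Real.pi*((j:ℝ)+1)*τ/L)))
        = (L/2) * (b i)^2 := by
      intro i _hi
      rw [intervalIntegral.integral_finset_sum]
      · have hterm : ∀ j ∈ s, (∫ τ in (0:ℝ)..L, (b i * b j) *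
            (Real.sin (Real.pi*((i:ℝ)+1)*τ/L) * Real.sin (Real.pi*((j:ℝ)+1)*τ/L)))
            = (b i * b j) * (if i = j then L/2 else 0) := by
          intro j _
          rw [intervalIntegral.integral_const_mul, sin_orth L hL]
        rw [Finset.sum_congr rfl hterm]
        by_cases hi : i ∈ s
        · rw [Finset.sum_eq_single i]
          · rw [if_pos rfl]; ring
          · intro j _ hji; rw [if_neg (fun h => hji (h.symm)), mul_zero]
          · intro h; exact absurd hi h
        · exact absurd _hi hi
      · intro j _
        exact (continuous_const.mul ((hcont i).mul (hcont j))).intervalIntegrable _ _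
    rw [Finset.sum_congr rfl this, ← Finset.mul_sum]
  · intro i _
    apply Continuous.intervalIntegrable
    apply continuous_finset_sum
    intro j _
    exact continuous_const.mul ((hcont i).mul (hcont j))

lemma finite_parseval_lintegral (L : ℝ) (hL : 0 < L) (b : ℕ → ℝ) (s : Finset ℕ) :
    ∫⁻ τ in Set.Ioo (0:ℝ) L,
        ENNReal.ofReal ((∑ k ∈ s, b k * Real.sin (Real.pi*((k:ℝ)+1)*τ/L))^2)
      = ENNReal.ofReal ((L/2) * ∑ k ∈ s, (b k)^2) := by
  have hcont : Continuous fun τ => (∑ k ∈ s, b k * Real.sin (Real.pi*((k:ℝ)+1)*τ/L))^2 := by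
    apply Continuous.pow
    apply continuous_finset_sum
    intro k _
    exact continuous_const.mul
      (Real.continuous_sin.comp ((continuous_const.mul continuous_id).div_const L))
  rw [setLIntegral_congr (Ioo_ae_eq_Ioc (μ := volume) (a := (0:ℝ)) (b := L))]
  rw [← ofReal_integral_eq_lintegral_ofReal]
  · rw [← intervalIntegral.integral_of_le hL.le, finite_parseval L hL]
  · exact hcont.integrableOn_Ioc
  · exact Filter.Eventually.of_forall fun τ => sq_nonneg _

lemma bessel_tsum (L : ℝ) (hL : 0 < L) (h : ℕ → ℝ) :
    ∫⁻ τ in Set.Ioo (0:ℝ) L,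
        ENNReal.ofReal ((∑' k, h k * Real.sin (Real.pi*((k:ℝ)+1)*τ/L))^2)
      ≤ ENNReal.ofReal (L/2) * ∑' k, ENNReal.ofReal ((h k)^2) := by
  set f : ℕ → ℝ → ℝ≥0∞ := fun n τ =>
    ENNReal.ofReal ((∑ k ∈ Finset.range n, h k * Real.sin (Real.pi*((k:ℝ)+1)*τ/L))^2) with hf
  have hmeas : ∀ n, Measurable (f n) := by
    intro n
    apply Measurable.ennreal_ofReal
    apply Continuous.measurable
    apply Continuous.pow
    apply continuous_finset_sum
    intro k _
    exact continuous_const.mul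
      (Real.continuous_sin.comp ((continuous_const.mul continuous_id).div_const L))
  have hpt : ∀ τ : ℝ, ENNReal.ofReal ((∑' k, h k * Real.sin (Real.pi*((k:ℝ)+1)*τ/L))^2)
      ≤ liminf (fun n => f n τ) atTop := by
    intro τ
    by_cases hs : Summable fun k => h k * Real.sin (Real.pi*((k:ℝ)+1)*τ/L)
    · have htend : Tendsto (fun n => f n τ) atTop
          (nhds (ENNReal.ofReal ((∑' k, h k * Real.sin (Real.pi*((k:ℝ)+1)*τ/L))^2))) := by
        apply (ENNReal.continuous_ofReal.tendsto _).comp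
        exact ((continuous_pow 2).tendsto _).comp hs.hasSum.tendsto_sum_nat
      rw [htend.liminf_eq]
    · rw [tsum_eq_zero_of_not_summable hs]
      simp
  calc ∫⁻ τ in Set.Ioo (0:ℝ) L,
        ENNReal.ofReal ((∑' k, h k * Real.sin (Real.pi*((k:ℝ)+1)*τ/L))^2)
      ≤ ∫⁻ τ in Set.Ioo (0:ℝ) L, liminf (fun n => f n τ) atTop := lintegral_mono hpt
    _ ≤ liminf (fun n => ∫⁻ τ in Set.Ioo (0:ℝ) L, f n τ) atTop := lintegral_liminf_le hmeas
    _ ≤ ENNReal.ofReal (L/2) * ∑' k, ENNReal.ofReal ((h k)^2) := by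
        have hev : ∀ n, (∫⁻ τ in Set.Ioo (0:ℝ) L, f n τ)
            ≤ ENNReal.ofReal (L/2) * ∑' k, ENNReal.ofReal ((h k)^2) := by
          intro n
          rw [hf]
          rw [finite_parseval_lintegral L hL h (Finset.range n)]
          rw [ENNReal.ofReal_mul (by positivity)]
          apply mul_le_mul_right _ _
          rw [ENNReal.ofReal_sum_of_nonneg (fun k _ => sq_nonneg _)]
          exact ENNReal.sum_le_tsum _
        exact (liminf_le_liminf (Eventually.of_forall hev)).trans_eq (liminf_const _)

lemma sin_bound (L : ℝ) (hL : 0 < L) (k : ℕ) {τ : ℝ} (hτ : τ ∈ Set.Ioo 0 L) :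
    |Real.sin (Real.pi*((k:ℝ)+1)*τ/L)| ≤ min 1 (Real.pi*((k:ℝ)+1)*(min τ (L-τ))/L) := by
  obtain ⟨h0, hτL⟩ := hτ
  refine le_min (abs_le.2 ⟨Real.neg_one_le_sin _, Real.sin_le_one _⟩) ?_
  rcases min_cases τ (L-τ) with ⟨hmin, _⟩ | ⟨hmin, _⟩ <;> rw [hmin]
  · calc |Real.sin (Real.pi*((k:ℝ)+1)*τ/L)| ≤ |Real.pi*((k:ℝ)+1)*τ/L| := Real.abs_sin_le_abs
      _ = Real.pi*((k:ℝ)+1)*τ/L := abs_of_nonneg (by positivity)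
  · have hid : Real.pi*((k:ℝ)+1)*τ/L = ((k+1 : ℕ):ℝ) * Real.pi - Real.pi*((k:ℝ)+1)*(L-τ)/L := by
      push_cast; field_simp; ring
    rw [hid, Real.sin_nat_mul_pi_sub, abs_neg, abs_mul, abs_pow, abs_neg, abs_one, one_pow,
      one_mul]
    calc |Real.sin (Real.pi*((k:ℝ)+1)*(L-τ)/L)| ≤ |Real.pi*((k:ℝ)+1)*(L-τ)/L| :=
        Real.abs_sin_le_abs
      _ = Real.pi*((k:ℝ)+1)*(L-τ)/L := abs_of_nonneg (by
          have : 0 ≤ L - τ := by linarith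
          positivity)

lemma local_energy (L : ℝ) (hL : 0 < L) (σ : ℝ) (hσ : 0 < σ) (hσ1 : σ ≤ 1)
    (a : ℕ → ℝ) (ρ : ℝ) (hρ : 1 ≤ ρ) :
    ∫⁻ τ in Set.Ioo (0:ℝ) L ∩ {τ : ℝ | min τ (L-τ) < L/ρ},
        ENNReal.ofReal ((∑' k, a k * Real.sin (Real.pi*((k:ℝ)+1)*τ/L))^2)
      ≤ ENNReal.ofReal ((4*Real.pi^2+1) * L * ρ^(-(2*σ))) *
          ∑' k : ℕ, ENNReal.ofReal ((1+((k:ℝ)+1)^2)^σ * (a k)^2) := by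
  have hρ0 : (0:ℝ) < ρ := lt_of_lt_of_le one_pos hρ
  set P : ℝ := ρ^(-(2*σ)) with hPdef
  have hP : 0 < P := Real.rpow_pos_of_pos hρ0 _
  set K : ℕ := ⌊ρ⌋₊ with hKdef
  have hKρ : (K:ℝ) ≤ ρ := Nat.floor_le hρ0.le
  have hρK : ρ < (K:ℝ) + 1 := Nat.lt_floor_add_one ρ
  set w : ℕ → ℝ := fun k => (1+((k:ℝ)+1)^2)^σ with hwdef
  have hw : ∀ k, 0 < w k := fun k => Real.rpow_pos_of_pos (by positivity) _
  set glow : ℝ → ℝ := fun τ => ∑ k ∈ Finset.range K, a k * Real.sin (Real.pi*((k:ℝ)+1)*τ/L)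
    with hglowdef
  set fh : ℕ → ℝ := fun k => if k < K then 0 else a k with hfhdef
  set ghigh : ℝ → ℝ := fun τ => ∑' k, fh k * Real.sin (Real.pi*((k:ℝ)+1)*τ/L) with hghighdef
  set Nlow : ℝ := ∑ k ∈ Finset.range K, w k * (a k)^2 with hNlowdef
  have hNlow0 : 0 ≤ Nlow := Finset.sum_nonneg fun k _ => mul_nonneg (hw k).le (sq_nonneg _)
  set N : ℝ≥0∞ := ∑' k, ENNReal.ofReal (w k * (a k)^2) with hNdef
  set S : Set ℝ := Set.Ioo (0:ℝ) L ∩ {τ : ℝ | min τ (L-τ) < L/ρ} with hSdef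
  have hSmeas : MeasurableSet S :=
    measurableSet_Ioo.inter
      (measurableSet_lt (measurable_id.min (measurable_const.sub measurable_id)) measurable_const)
  -- pointwise splitting
  have hsplit : ∀ τ : ℝ, (∑' k, a k * Real.sin (Real.pi*((k:ℝ)+1)*τ/L))^2
      ≤ 2*(glow τ)^2 + 2*(ghigh τ)^2 := by
    intro τ
    by_cases hs : Summable fun k => a k * Real.sin (Real.pi*((k:ℝ)+1)*τ/L)
    · set fl : ℕ → ℝ := fun k => if k < K then a k * Real.sin (Real.pi*((k:ℝ)+1)*τ/L) else 0
        with hfldef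
      have hfl : Summable fl := summable_of_ne_finset_zero (s := Finset.range K)
        (fun k hk => by simp only [hfldef]; exact if_neg (Nat.not_lt.2 (by simpa using hk)))
      have hfhs : Summable fun k => fh k * Real.sin (Real.pi*((k:ℝ)+1)*τ/L) := by
        apply (hs.sub hfl).congr
        intro k
        by_cases hk : k < K <;> simp [hfldef, hfhdef, hk]
      have hdecomp : (∑' k, a k * Real.sin (Real.pi*((k:ℝ)+1)*τ/L)) = glow τ + ghigh τ := by
        have : ∀ k, a k * Real.sin (Real.pi*((k:ℝ)+1)*τ/L)
            = fl k + fh k * Real.sin (Real.pi*((k:ℝ)+1)*τ/L) := by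
          intro k; by_cases hk : k < K <;> simp [hfldef, hfhdef, hk]
        rw [tsum_congr this, Summable.tsum_add hfl hfhs]
        congr 1
        rw [tsum_eq_sum (s := Finset.range K) (fun k hk => by
          simp only [hfldef]; exact if_neg (Nat.not_lt.2 (by simpa using hk)))]
        apply Finset.sum_congr rfl
        intro k hk
        simp [hfldef, Finset.mem_range.1 hk]
      rw [hdecomp]
      nlinarith [sq_nonneg (glow τ - ghigh τ)]
    · rw [tsum_eq_zero_of_not_summable hs]
      have : (0:ℝ) ≤ 2*(glow τ)^2 + 2*(ghigh τ)^2 := by positivity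
      simpa using this
  -- low frequency pointwise bound on S
  have hlowpt : ∀ τ ∈ S, (glow τ)^2 ≤ Real.pi^2 * ρ * P * Nlow := by
    intro τ hτ
    obtain ⟨hτI, hτd⟩ := hτ
    have habs : |glow τ| ≤ (Real.pi/ρ) * ∑ k ∈ Finset.range K, |a k| * ((k:ℝ)+1) := by
      rw [hglowdef]
      calc |∑ k ∈ Finset.range K, a k * Real.sin (Real.pi*((k:ℝ)+1)*τ/L)|
          ≤ ∑ k ∈ Finset.range K, |a k * Real.sin (Real.pi*((k:ℝ)+1)*τ/L)| :=
            Finset.abs_sum_le_sum_abs _ _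
        _ ≤ ∑ k ∈ Finset.range K, |a k| * (Real.pi*((k:ℝ)+1)/ρ) := by
            apply Finset.sum_le_sum
            intro k _
            rw [abs_mul]
            apply mul_le_mul_of_nonneg_left _ (abs_nonneg _)
            calc |Real.sin (Real.pi*((k:ℝ)+1)*τ/L)|
                ≤ min 1 (Real.pi*((k:ℝ)+1)*(min τ (L-τ))/L) := sin_bound L hL k hτI
              _ ≤ Real.pi*((k:ℝ)+1)*(min τ (L-τ))/L := min_le_right _ _
              _ ≤ Real.pi*((k:ℝ)+1)/ρ := by
                  rw [div_le_div_iff₀ hL (by positivity)]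
                  calc Real.pi*((k:ℝ)+1)*(min τ (L-τ)) * ρ
                      ≤ Real.pi*((k:ℝ)+1)*(L/ρ) * ρ := by
                        apply mul_le_mul_of_nonneg_right _ hρ0.le
                        apply mul_le_mul_of_nonneg_left hτd.le (by positivity)
                    _ = Real.pi*((k:ℝ)+1)*L := by field_simp
        _ = (Real.pi/ρ) * ∑ k ∈ Finset.range K, |a k| * ((k:ℝ)+1) := by
            rw [Finset.mul_sum]
            apply Finset.sum_congr rfl
            intro k _; ring
    have hCS : (∑ k ∈ Finset.range K, |a k| * ((k:ℝ)+1))^2 ≤ Nlow * (ρ^3 * P) := by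
      have hid : ∀ k, |a k| * ((k:ℝ)+1)
          = (Real.sqrt (w k) * |a k|) * (((k:ℝ)+1) / Real.sqrt (w k)) := by
        intro k
        have : Real.sqrt (w k) ≠ 0 := (Real.sqrt_pos.2 (hw k)).ne'
        field_simp
      calc (∑ k ∈ Finset.range K, |a k| * ((k:ℝ)+1))^2
          = (∑ k ∈ Finset.range K,
              (Real.sqrt (w k) * |a k|) * (((k:ℝ)+1) / Real.sqrt (w k)))^2 := by
            rw [Finset.sum_congr rfl (fun k _ => hid k)]
        _ ≤ (∑ k ∈ Finset.range K, (Real.sqrt (w k) * |a k|)^2) *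
              ∑ k ∈ Finset.range K, (((k:ℝ)+1) / Real.sqrt (w k))^2 :=
            Finset.sum_mul_sq_le_sq_mul_sq _ _ _
        _ ≤ Nlow * (ρ^3 * P) := by
            apply mul_le_mul
            · apply le_of_eq
              rw [hNlowdef]
              apply Finset.sum_congr rfl
              intro k _
              rw [mul_pow, Real.sq_sqrt (hw k).le, sq_abs]
            · calc ∑ k ∈ Finset.range K, (((k:ℝ)+1) / Real.sqrt (w k))^2
                  ≤ ∑ k ∈ Finset.range K, ρ^2 * P := by
                    apply Finset.sum_le_sum
                    intro k hk
                    have hk1 : ((k:ℝ)+1) ≤ ρ := by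
                      have : (k:ℝ) + 1 ≤ (K:ℝ) := by
                        have := Finset.mem_range.1 hk
                        exact_mod_cast Nat.succ_le_of_lt this
                      linarith
                    have hk0 : (0:ℝ) < (k:ℝ)+1 := by positivity
                    rw [div_pow, Real.sq_sqrt (hw k).le]
                    rw [div_le_iff₀ (hw k)]
                    -- (k+1)^2 ≤ ρ^2 * P * w k
                    have hwk : ((k:ℝ)+1)^(2*σ) ≤ w k := by
                      rw [hwdef]
                      calc ((k:ℝ)+1)^(2*σ) = (((k:ℝ)+1)^(2:ℝ))^σ := by
                            rw [← Real.rpow_mul hk0.le]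
                        _ ≤ (1+((k:ℝ)+1)^2)^σ := by
                            apply Real.rpow_le_rpow (Real.rpow_nonneg hk0.le _) _ hσ.le
                            rw [Real.rpow_two]
                            linarith
                    have hsplit2 : ((k:ℝ)+1)^(2:ℝ) = ((k:ℝ)+1)^(2-2*σ) * ((k:ℝ)+1)^(2*σ) := by
                      rw [← Real.rpow_add hk0]; ring_nf
                    have hbase : ((k:ℝ)+1)^(2-2*σ) ≤ ρ^(2-2*σ) :=
                      Real.rpow_le_rpow hk0.le hk1 (by linarith)
                    have hofρ : ρ^(2-2*σ) = ρ^2 * P := by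
                      rw [hPdef, show (2:ℝ)-2*σ = 2 + -(2*σ) by ring, Real.rpow_add hρ0,
                        Real.rpow_two]
                    calc ((k:ℝ)+1)^2 = ((k:ℝ)+1)^(2:ℝ) := by
                          rw [Real.rpow_two]
                      _ = ((k:ℝ)+1)^(2-2*σ) * ((k:ℝ)+1)^(2*σ) := hsplit2
                      _ ≤ ρ^(2-2*σ) * w k := by
                          apply mul_le_mul hbase hwk (Real.rpow_nonneg hk0.le _)
                            (Real.rpow_nonneg (by linarith) _)
                      _ = ρ^2 * P * w k := by rw [hofρ]
                _ = (K:ℝ) * (ρ^2 * P) := by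
                    rw [Finset.sum_const, Finset.card_range, nsmul_eq_mul]
                _ ≤ ρ^3 * P := by
                    have : (K:ℝ) * (ρ^2 * P) ≤ ρ * (ρ^2 * P) := by
                      apply mul_le_mul_of_nonneg_right hKρ (by positivity)
                    calc (K:ℝ) * (ρ^2 * P) ≤ ρ * (ρ^2 * P) := this
                      _ = ρ^3 * P := by ring
            · positivity
            · exact hNlow0
    calc (glow τ)^2 = |glow τ|^2 := (sq_abs _).symm
      _ ≤ ((Real.pi/ρ) * ∑ k ∈ Finset.range K, |a k| * ((k:ℝ)+1))^2 := by
          apply pow_le_pow_left₀ (abs_nonneg _) habs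
      _ = (Real.pi/ρ)^2 * (∑ k ∈ Finset.range K, |a k| * ((k:ℝ)+1))^2 := by ring
      _ ≤ (Real.pi/ρ)^2 * (Nlow * (ρ^3 * P)) := by
          apply mul_le_mul_of_nonneg_left hCS (by positivity)
      _ = Real.pi^2 * ρ * P * Nlow := by field_simp
  -- measure of S
  have hμS : volume S ≤ ENNReal.ofReal (2*(L/ρ)) := by
    have hsub : S ⊆ Set.Ioo 0 (L/ρ) ∪ Set.Ioo (L - L/ρ) L := by
      rintro τ ⟨⟨h0, hτL⟩, hd⟩
      simp only [Set.mem_setOf_eq] at hd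
      rcases min_lt_iff.1 hd with h | h
      · exact Or.inl ⟨h0, h⟩
      · exact Or.inr ⟨by linarith, hτL⟩
    have hLρ : 0 ≤ L/ρ := by positivity
    calc volume S ≤ volume (Set.Ioo 0 (L/ρ) ∪ Set.Ioo (L - L/ρ) L) := measure_mono hsub
      _ ≤ volume (Set.Ioo 0 (L/ρ)) + volume (Set.Ioo (L - L/ρ) L) := measure_union_le _ _
      _ = ENNReal.ofReal (L/ρ - 0) + ENNReal.ofReal (L - (L - L/ρ)) := by
          rw [Real.volume_Ioo, Real.volume_Ioo]
      _ = ENNReal.ofReal (2*(L/ρ)) := by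
          rw [show L/ρ - 0 = L/ρ by ring, show L - (L - L/ρ) = L/ρ by ring,
            ← ENNReal.ofReal_add hLρ hLρ]
          congr 1; ring
  have hNlowN : ENNReal.ofReal Nlow ≤ N := by
    rw [hNlowdef, ENNReal.ofReal_sum_of_nonneg (fun k _ => mul_nonneg (hw k).le (sq_nonneg _))]
    exact ENNReal.sum_le_tsum _
  have hmono : ∀ τ : ℝ,
      ENNReal.ofReal ((∑' k, a k * Real.sin (Real.pi*((k:ℝ)+1)*τ/L))^2)
        ≤ ENNReal.ofReal (2*(glow τ)^2) + ENNReal.ofReal (2*(ghigh τ)^2) :=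
    fun τ => (ENNReal.ofReal_le_ofReal (hsplit τ)).trans ENNReal.ofReal_add_le
  have hglowmeas : Measurable fun τ => ENNReal.ofReal (2*(glow τ)^2) := by
    apply Measurable.ennreal_ofReal
    apply Continuous.measurable
    apply Continuous.mul continuous_const
    apply Continuous.pow
    apply continuous_finset_sum
    intro k _
    exact continuous_const.mul
      (Real.continuous_sin.comp ((continuous_const.mul continuous_id).div_const L))
  have hlowint : ∫⁻ τ in S, ENNReal.ofReal (2*(glow τ)^2)
      ≤ ENNReal.ofReal (4*Real.pi^2*L*P) * N := by
    calc ∫⁻ τ in S, ENNReal.ofReal (2*(glow τ)^2)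
        ≤ ∫⁻ _ in S, ENNReal.ofReal (2*(Real.pi^2 * ρ * P * Nlow)) := by
          apply setLIntegral_mono measurable_const
          intro τ hτ
          apply ENNReal.ofReal_le_ofReal
          have := hlowpt τ hτ
          linarith
      _ = ENNReal.ofReal (2*(Real.pi^2 * ρ * P * Nlow)) * volume S := setLIntegral_const _ _
      _ ≤ ENNReal.ofReal (2*(Real.pi^2 * ρ * P * Nlow)) * ENNReal.ofReal (2*(L/ρ)) :=
          mul_le_mul_right hμS _
      _ = ENNReal.ofReal (4*Real.pi^2*L*P) * ENNReal.ofReal Nlow := by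
          rw [← ENNReal.ofReal_mul (by positivity), ← ENNReal.ofReal_mul (by positivity)]
          congr 1
          field_simp
          ring
      _ ≤ ENNReal.ofReal (4*Real.pi^2*L*P) * N := mul_le_mul_right hNlowN _
  have hhighsum : (∑' k : ℕ, ENNReal.ofReal ((fh k)^2)) ≤ ENNReal.ofReal P * N := by
    rw [hNdef, ← ENNReal.tsum_mul_left]
    apply ENNReal.tsum_le_tsum
    intro k
    by_cases hk : k < K
    · simp only [hfhdef, if_pos hk]
      simp
    · have hk' : K ≤ k := Nat.not_lt.1 hk
      have hk1 : ρ ≤ (k:ℝ) + 1 := by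
        have : (K:ℝ) ≤ (k:ℝ) := Nat.cast_le.2 hk'
        linarith
      have h1 : ρ^(2*σ) ≤ w k := by
        rw [hwdef]
        calc ρ^(2*σ) = (ρ^(2:ℝ))^σ := by rw [← Real.rpow_mul hρ0.le]
          _ ≤ (1+((k:ℝ)+1)^2)^σ := by
              apply Real.rpow_le_rpow (Real.rpow_nonneg hρ0.le _) _ hσ.le
              rw [Real.rpow_two]
              nlinarith
      have hPw : 1 ≤ P * w k := by
        have h2 : (ρ^(2*σ))⁻¹ * ρ^(2*σ) ≤ (ρ^(2*σ))⁻¹ * w k :=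
          mul_le_mul_of_nonneg_left h1 (by positivity)
        rw [inv_mul_cancel₀ (Real.rpow_pos_of_pos hρ0 _).ne'] at h2
        rw [hPdef, Real.rpow_neg hρ0.le]
        exact h2
      have hsq : (a k)^2 ≤ P * (w k * (a k)^2) := by
        have := mul_le_mul_of_nonneg_right hPw (sq_nonneg (a k))
        rw [one_mul] at this
        calc (a k)^2 ≤ P * w k * (a k)^2 := this
          _ = P * (w k * (a k)^2) := by ring
      calc ENNReal.ofReal ((fh k)^2) = ENNReal.ofReal ((a k)^2) := by
            rw [hfhdef]; simp [hk]
        _ ≤ ENNReal.ofReal (P * (w k * (a k)^2)) := ENNReal.ofReal_le_ofReal hsq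
        _ = ENNReal.ofReal P * ENNReal.ofReal (w k * (a k)^2) := ENNReal.ofReal_mul hP.le
  have htwo : (2:ℝ≥0∞) = ENNReal.ofReal 2 := by simp
  have hhighint : ∫⁻ τ in S, ENNReal.ofReal (2*(ghigh τ)^2) ≤ ENNReal.ofReal (L * P) * N := by
    calc ∫⁻ τ in S, ENNReal.ofReal (2*(ghigh τ)^2)
        ≤ ∫⁻ τ in Set.Ioo (0:ℝ) L, ENNReal.ofReal (2*(ghigh τ)^2) :=
          lintegral_mono' (Measure.restrict_mono Set.inter_subset_left le_rfl) le_rfl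
      _ = 2 * ∫⁻ τ in Set.Ioo (0:ℝ) L, ENNReal.ofReal ((ghigh τ)^2) := by
          rw [← lintegral_const_mul' 2 _ ENNReal.ofNat_ne_top]
          apply lintegral_congr
          intro τ
          rw [ENNReal.ofReal_mul (by norm_num), htwo]
      _ ≤ 2 * (ENNReal.ofReal (L/2) * ∑' k : ℕ, ENNReal.ofReal ((fh k)^2)) := by
          apply mul_le_mul_right
          exact bessel_tsum L hL fh
      _ ≤ 2 * (ENNReal.ofReal (L/2) * (ENNReal.ofReal P * N)) := by
          apply mul_le_mul_right
          exact mul_le_mul_right hhighsum _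
      _ = (2 * (ENNReal.ofReal (L/2) * ENNReal.ofReal P)) * N := by ring
      _ = ENNReal.ofReal (L * P) * N := by
          have hLP : ENNReal.ofReal (L*P) = 2 * (ENNReal.ofReal (L/2) * ENNReal.ofReal P) := by
            rw [← ENNReal.ofReal_mul (by linarith : (0:ℝ) ≤ L/2), htwo,
              ← ENNReal.ofReal_mul (by norm_num : (0:ℝ) ≤ 2)]
            congr 1; ring
          rw [hLP]
  calc ∫⁻ τ in S, ENNReal.ofReal ((∑' k, a k * Real.sin (Real.pi*((k:ℝ)+1)*τ/L))^2)
      ≤ ∫⁻ τ in S, (ENNReal.ofReal (2*(glow τ)^2) + ENNReal.ofReal (2*(ghigh τ)^2)) :=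
        lintegral_mono hmono
    _ = (∫⁻ τ in S, ENNReal.ofReal (2*(glow τ)^2))
        + ∫⁻ τ in S, ENNReal.ofReal (2*(ghigh τ)^2) := lintegral_add_left hglowmeas _
    _ ≤ ENNReal.ofReal (4*Real.pi^2*L*P) * N + ENNReal.ofReal (L * P) * N :=
        add_le_add hlowint hhighint
    _ = (ENNReal.ofReal (4*Real.pi^2*L*P) + ENNReal.ofReal (L * P)) * N := (add_mul _ _ _).symm
    _ = ENNReal.ofReal ((4*Real.pi^2+1) * L * P) * N := by
        rw [← ENNReal.ofReal_add (by positivity) (by positivity)]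
        congr 1
        ring

lemma rpow_npow_comm {x : ℝ} (hx : 0 ≤ x) (e : ℝ) (n : ℕ) : (x^n)^e = (x^e)^n := by
  rw [← Real.rpow_natCast x n, ← Real.rpow_mul hx, mul_comm, Real.rpow_mul hx,
    Real.rpow_natCast]

lemma weighted_energy (L : ℝ) (hL : 0 < L) (α σ : ℝ) (hα : 0 < α) (hασ : α < σ)
    (hσ1 : σ ≤ 1) :
    ∃ C > (0:ℝ), ∀ a : ℕ → ℝ,
    (∫⁻ τ in Set.Ioo (0:ℝ) L,
        ENNReal.ofReal ((min τ (L-τ)) ^ (-(2*α))) *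
          ENNReal.ofReal ((∑' k : ℕ, a k * Real.sin (Real.pi*((k:ℝ)+1)*τ/L))^2))
      ≤ ENNReal.ofReal C * ∑' k : ℕ, ENNReal.ofReal ((1+((k:ℝ)+1)^2)^σ * (a k)^2) := by
  set e : ℝ := -(2*α) with hedef
  set s : ℝ := (2:ℝ)^(-(2*α)) with hsdef
  set t : ℝ := (2:ℝ)^(-(2*σ)) with htdef
  set q : ℝ := (2:ℝ)^(-(2*(σ-α))) with hqdef
  have hs0 : 0 < s := Real.rpow_pos_of_pos two_pos _
  have ht0 : 0 < t := Real.rpow_pos_of_pos two_pos _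
  have hq0 : 0 < q := Real.rpow_pos_of_pos two_pos _
  have hq1 : q < 1 := Real.rpow_lt_one_of_one_lt_of_neg one_lt_two (by nlinarith)
  have hqts : q = t / s := by
    rw [hqdef, htdef, hsdef, ← Real.rpow_sub two_pos]
    congr 1; ring
  set CE : ℝ := (4*Real.pi^2+1) * L with hCEdef
  have hCE : 0 < CE := by positivity
  set C2 : ℝ := CE * L^e / s^2 with hC2def
  have hC2 : 0 < C2 := div_pos (mul_pos hCE (Real.rpow_pos_of_pos hL e)) (pow_pos hs0 2)
  refine ⟨C2 * (1-q)⁻¹, mul_pos hC2 (inv_pos.2 (by linarith)), ?_⟩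
  intro a
  set G : ℝ → ℝ≥0∞ := fun τ =>
    ENNReal.ofReal ((∑' k : ℕ, a k * Real.sin (Real.pi*((k:ℝ)+1)*τ/L))^2) with hGdef
  have hGmeas : Measurable G := by
    apply Measurable.ennreal_ofReal
    apply Measurable.pow_const
    apply measurable_tsum_real
    intro k
    exact (measurable_const.mul
      (Real.continuous_sin.measurable.comp
        ((measurable_const.mul measurable_id).div_const L)))
  set N : ℝ≥0∞ := ∑' k : ℕ, ENNReal.ofReal ((1+((k:ℝ)+1)^2)^σ * (a k)^2) with hNdef
  set A : ℕ → Set ℝ := fun m =>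
    Set.Ioo (0:ℝ) L ∩ {τ | L/(2:ℝ)^(m+2) < min τ (L-τ) ∧ min τ (L-τ) ≤ L/(2:ℝ)^(m+1)}
    with hAdef
  have hAmeas : ∀ m, MeasurableSet (A m) := by
    intro m
    apply measurableSet_Ioo.inter
    have hmin : Measurable fun τ : ℝ => min τ (L-τ) :=
      measurable_id.min (measurable_const.sub measurable_id)
    exact (measurableSet_lt measurable_const hmin).inter (measurableSet_le hmin measurable_const)
  -- covering
  have hcover : Set.Ioo (0:ℝ) L ⊆ ⋃ m, A m := by
    intro τ hτ
    obtain ⟨h0, hτL⟩ := hτ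
    set d : ℝ := min τ (L-τ) with hddef
    have hd0 : 0 < d := lt_min h0 (by linarith)
    have hdL : 2 ≤ L/d := by
      rw [le_div_iff₀ hd0]
      have h1 : d ≤ τ := min_le_left _ _
      have h2 : d ≤ L - τ := min_le_right _ _
      linarith
    set n : ℕ := ⌊L/d⌋₊ with hndef
    have hn2 : 2 ≤ n := Nat.le_floor (by exact_mod_cast hdL)
    set j : ℕ := Nat.log 2 n with hjdef
    have hj1 : 1 ≤ j := by
      rw [hjdef]
      exact Nat.le_log_of_pow_le one_lt_two (by simpa using hn2)
    have hlow : ((2:ℝ))^j ≤ L/d := by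
      calc ((2:ℝ))^j ≤ (n:ℝ) := by exact_mod_cast Nat.pow_log_le_self 2 (by omega)
        _ ≤ L/d := Nat.floor_le (by positivity)
    have hhigh : L/d < ((2:ℝ))^(j+1) := by
      calc L/d < (n:ℝ) + 1 := Nat.lt_floor_add_one _
        _ ≤ ((2:ℝ))^(j+1) := by exact_mod_cast Nat.lt_pow_succ_log_self one_lt_two n
    refine Set.mem_iUnion.2 ⟨j - 1, ⟨⟨h0, hτL⟩, ?_, ?_⟩⟩
    · have hj2 : j - 1 + 2 = j + 1 := by omega
      rw [hj2]
      rw [div_lt_iff₀ (by positivity)]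
      rw [div_lt_iff₀ hd0] at hhigh
      linarith [hhigh]
    · have hj1' : j - 1 + 1 = j := by omega
      rw [hj1']
      rw [le_div_iff₀ (by positivity)]
      rw [le_div_iff₀ hd0] at hlow
      linarith [hlow]
  -- per-piece estimate
  have hpiece : ∀ m : ℕ,
      (∫⁻ τ in A m, ENNReal.ofReal ((min τ (L-τ)) ^ e) * G τ)
        ≤ ENNReal.ofReal (C2 * q^m) * N := by
    intro m
    set cm : ℝ := (L/(2:ℝ)^(m+2))^e with hcmdef
    have hbase : (0:ℝ) < L/(2:ℝ)^(m+2) := by positivity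
    have hcm0 : 0 < cm := Real.rpow_pos_of_pos hbase _
    have hstep1 : (∫⁻ τ in A m, ENNReal.ofReal ((min τ (L-τ)) ^ e) * G τ)
        ≤ ENNReal.ofReal cm * ∫⁻ τ in A m, G τ := by
      rw [← lintegral_const_mul' _ _ ENNReal.ofReal_ne_top]
      apply setLIntegral_mono (measurable_const.mul hGmeas)
      intro τ hτ
      apply mul_le_mul_left
      apply ENNReal.ofReal_le_ofReal
      exact Real.rpow_le_rpow_of_nonpos hbase (le_of_lt hτ.2.1) (by rw [hedef]; nlinarith)
    have hsub : A m ⊆ Set.Ioo (0:ℝ) L ∩ {τ : ℝ | min τ (L-τ) < L/((2:ℝ)^m)} := by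
      rintro τ ⟨hI, _, hup⟩
      refine ⟨hI, lt_of_le_of_lt hup ?_⟩
      apply div_lt_div_of_pos_left hL (by positivity)
      exact pow_lt_pow_right₀ one_lt_two (by omega)
    have hstep2 : (∫⁻ τ in A m, G τ)
        ≤ ENNReal.ofReal (CE * ((2:ℝ)^m)^(-(2*σ))) * N := by
      calc (∫⁻ τ in A m, G τ)
          ≤ ∫⁻ τ in Set.Ioo (0:ℝ) L ∩ {τ : ℝ | min τ (L-τ) < L/((2:ℝ)^m)}, G τ :=
            lintegral_mono' (Measure.restrict_mono hsub le_rfl) le_rfl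
        _ ≤ ENNReal.ofReal ((4*Real.pi^2+1) * L * ((2:ℝ)^m)^(-(2*σ))) * N := by
            rw [hGdef, hNdef]
            exact local_energy L hL σ (by linarith) hσ1 a ((2:ℝ)^m) (one_le_pow₀ one_le_two)
        _ = ENNReal.ofReal (CE * ((2:ℝ)^m)^(-(2*σ))) * N := by rw [hCEdef, mul_assoc]
    have hconst : cm * (CE * ((2:ℝ)^m)^(-(2*σ))) = C2 * q^m := by
      have h1 : cm = L^e / s^(m+2) := by
        rw [hcmdef, Real.div_rpow hL.le (by positivity), rpow_npow_comm (by norm_num) e (m+2),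
          hsdef, hedef]
      have h2 : ((2:ℝ)^m)^(-(2*σ)) = t^m := by
        rw [rpow_npow_comm (by norm_num) _ m, htdef]
      rw [h1, h2, hC2def, hqts, div_pow, pow_add]
      field_simp
    calc (∫⁻ τ in A m, ENNReal.ofReal ((min τ (L-τ)) ^ e) * G τ)
        ≤ ENNReal.ofReal cm * (ENNReal.ofReal (CE * ((2:ℝ)^m)^(-(2*σ))) * N) :=
          hstep1.trans (mul_le_mul_right hstep2 _)
      _ = ENNReal.ofReal (C2 * q^m) * N := by
          rw [← mul_assoc, ← ENNReal.ofReal_mul hcm0.le, hconst]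
  -- sum up
  calc (∫⁻ τ in Set.Ioo (0:ℝ) L, ENNReal.ofReal ((min τ (L-τ)) ^ e) * G τ)
      ≤ ∫⁻ τ in ⋃ m, A m, ENNReal.ofReal ((min τ (L-τ)) ^ e) * G τ :=
        lintegral_mono' (Measure.restrict_mono hcover le_rfl) le_rfl
    _ ≤ ∑' m : ℕ, ∫⁻ τ in A m, ENNReal.ofReal ((min τ (L-τ)) ^ e) * G τ :=
        lintegral_iUnion_le _ _
    _ ≤ ∑' m : ℕ, ENNReal.ofReal (C2 * q^m) * N := ENNReal.tsum_le_tsum hpiece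
    _ = (∑' m : ℕ, ENNReal.ofReal (C2 * q^m)) * N := ENNReal.tsum_mul_right
    _ = ENNReal.ofReal (C2 * (1-q)⁻¹) * N := by
        have hgeo : (∑' m : ℕ, ENNReal.ofReal (C2 * q^m))
            = ENNReal.ofReal (C2 * (1-q)⁻¹) := by
          have h1 : ∀ m : ℕ, ENNReal.ofReal (C2 * q^m)
              = ENNReal.ofReal C2 * (ENNReal.ofReal q)^m := by
            intro m
            rw [ENNReal.ofReal_mul hC2.le, ENNReal.ofReal_pow hq0.le]
          rw [tsum_congr h1, ENNReal.tsum_mul_left, ENNReal.tsum_geometric,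
            ENNReal.ofReal_mul hC2.le, ENNReal.ofReal_inv_of_pos (by linarith)]
          congr 2
          rw [ENNReal.ofReal_sub _ hq0.le, ENNReal.ofReal_one]
        rw [hgeo]

/-- Mixed Sobolev estimates on `[0, L] × 𝕋²`, stated spectrally in terms of the Fourier
coefficients `c (n₁, n₂)` with respect to the Dirichlet basis
`sin(π(n₁+1)τ/L) e^{2πi n₂·z}`.
First conjunct: `‖f‖_{H^α_τ H^β_z} ≤ ‖f‖_{H^{α+β}}`.
Second conjunct: for every `δ > 0` there is `C` with
`‖d(τ,{0,L})^{-α} f‖²_{L²_τ H^β_z} ≤ C ‖f‖²_{H^{α+β+δ}}`, where `d(τ,{0,L}) = min(τ, L-τ)`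
and the `H^β_z` norm of the `τ`-slice is computed from the partial Fourier series in `z`. -/
theorem mixed_sobolev_boundary_weight (L : ℝ) (hL : 0 < L) (α β : ℝ)
    (hα : 0 < α) (hβ : 0 < β) (hαβ : α + β < 1) :
    (∀ c : ℕ × ℤ × ℤ → ℝ,
      (∑' n : ℕ × ℤ × ℤ,
          ENNReal.ofReal ((1 + ((n.1 : ℝ) + 1) ^ 2) ^ α *
            (1 + (n.2.1 : ℝ) ^ 2 + (n.2.2 : ℝ) ^ 2) ^ β * c n ^ 2))
        ≤ ∑' n : ℕ × ℤ × ℤ,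
            ENNReal.ofReal
              ((1 + ((n.1 : ℝ) + 1) ^ 2 + (n.2.1 : ℝ) ^ 2 + (n.2.2 : ℝ) ^ 2) ^ (α + β) *
                c n ^ 2)) ∧
    (∀ δ : ℝ, 0 < δ → ∃ C > (0 : ℝ), ∀ c : ℕ × ℤ × ℤ → ℝ,
      (∫⁻ τ in Set.Ioo (0 : ℝ) L,
          ENNReal.ofReal ((min τ (L - τ)) ^ (-(2 * α))) *
            ∑' n₂ : ℤ × ℤ,
              ENNReal.ofReal ((1 + (n₂.1 : ℝ) ^ 2 + (n₂.2 : ℝ) ^ 2) ^ β *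
                (∑' n₁ : ℕ, c (n₁, n₂) * Real.sin (Real.pi * ((n₁ : ℝ) + 1) * τ / L)) ^ 2))
        ≤ ENNReal.ofReal C *
            ∑' n : ℕ × ℤ × ℤ,
              ENNReal.ofReal
                ((1 + ((n.1 : ℝ) + 1) ^ 2 + (n.2.1 : ℝ) ^ 2 + (n.2.2 : ℝ) ^ 2) ^ (α + β + δ) *
                  c n ^ 2)) := by
  have hα1 : α < 1 := by linarith
  constructor
  · intro c
    apply ENNReal.tsum_le_tsum
    intro n
    apply ENNReal.ofReal_le_ofReal
    apply mul_le_mul_of_nonneg_right _ (sq_nonneg _)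
    set x : ℝ := ((n.1 : ℝ) + 1) ^ 2 with hx
    set y : ℝ := (n.2.1 : ℝ) ^ 2 + (n.2.2 : ℝ) ^ 2 with hy
    have hx0 : 0 ≤ x := sq_nonneg _
    have hy0 : 0 ≤ y := add_nonneg (sq_nonneg _) (sq_nonneg _)
    have hM : (0:ℝ) < 1 + x + y := by linarith
    have h1 : (1 + x) ^ α ≤ (1 + x + y) ^ α :=
      Real.rpow_le_rpow (by linarith) (by linarith) hα.le
    have h2 : (1 + y) ^ β ≤ (1 + x + y) ^ β :=
      Real.rpow_le_rpow (by linarith) (by linarith) hβ.le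
    have h3 : (1 + (n.2.1 : ℝ) ^ 2 + (n.2.2 : ℝ) ^ 2) = 1 + y := by rw [hy]; ring
    have h4 : (1 + x + (n.2.1 : ℝ) ^ 2 + (n.2.2 : ℝ) ^ 2) = 1 + x + y := by rw [hy]; ring
    rw [h3, h4]
    calc (1 + x) ^ α * (1 + y) ^ β ≤ (1 + x + y) ^ α * (1 + x + y) ^ β := by
          apply mul_le_mul h1 h2 (Real.rpow_nonneg (by linarith) _)
            (Real.rpow_nonneg hM.le _)
      _ = (1 + x + y) ^ (α + β) := (Real.rpow_add hM _ _).symm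
  · intro δ hδ
    set δ' : ℝ := min δ ((1-α)/2) with hδ'def
    have hδ'0 : 0 < δ' := lt_min hδ (by linarith)
    have hδ'δ : δ' ≤ δ := min_le_left _ _
    set σ : ℝ := α + δ' with hσdef
    have hσ1 : σ ≤ 1 := by
      have : δ' ≤ (1-α)/2 := min_le_right _ _
      rw [hσdef]; linarith
    obtain ⟨C, hC, hbound⟩ := weighted_energy L hL α σ hα (by rw [hσdef]; linarith) hσ1
    refine ⟨C, hC, ?_⟩
    intro c
    set W : ℝ → ℝ≥0∞ := fun τ => ENNReal.ofReal ((min τ (L - τ)) ^ (-(2 * α))) with hWdef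
    set g : ℤ × ℤ → ℝ → ℝ := fun n₂ τ =>
      ∑' n₁ : ℕ, c (n₁, n₂) * Real.sin (Real.pi * ((n₁ : ℝ) + 1) * τ / L) with hgdef
    set wβ : ℤ × ℤ → ℝ := fun n₂ => (1 + (n₂.1 : ℝ) ^ 2 + (n₂.2 : ℝ) ^ 2) ^ β with hwβdef
    have hwβ0 : ∀ n₂, 0 ≤ wβ n₂ := by
      intro n₂
      apply Real.rpow_nonneg
      positivity
    have hgmeas : ∀ n₂, Measurable (g n₂) := by
      intro n₂
      apply measurable_tsum_real
      intro k
      exact measurable_const.mul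
        (Real.continuous_sin.measurable.comp ((measurable_const.mul measurable_id).div_const L))
    have hWmeas : AEMeasurable W (volume.restrict (Set.Ioo (0:ℝ) L)) := by
      apply AEMeasurable.ennreal_ofReal
      apply ContinuousOn.aemeasurable _ measurableSet_Ioo
      apply ContinuousOn.rpow_const
        ((continuous_id.min (continuous_const.sub continuous_id)).continuousOn)
      intro τ hτ
      left
      have : 0 < min τ (L - τ) := lt_min hτ.1 (by linarith [hτ.2])
      exact this.ne'
    -- swap integral and sum
    have hswap : (∫⁻ τ in Set.Ioo (0 : ℝ) L,
          W τ * ∑' n₂ : ℤ × ℤ, ENNReal.ofReal (wβ n₂ * (g n₂ τ) ^ 2))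
        = ∑' n₂ : ℤ × ℤ, ∫⁻ τ in Set.Ioo (0 : ℝ) L,
            W τ * ENNReal.ofReal (wβ n₂ * (g n₂ τ) ^ 2) := by
      rw [← lintegral_tsum]
      · apply lintegral_congr
        intro τ
        exact (ENNReal.tsum_mul_left).symm
      · intro n₂
        apply hWmeas.mul
        apply Measurable.aemeasurable
        apply Measurable.ennreal_ofReal
        exact (measurable_const.mul ((hgmeas n₂).pow_const 2))
    rw [hswap]
    -- per slice bound
    have hslice : ∀ n₂ : ℤ × ℤ,
        (∫⁻ τ in Set.Ioo (0 : ℝ) L, W τ * ENNReal.ofReal (wβ n₂ * (g n₂ τ) ^ 2))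
          ≤ ENNReal.ofReal C * ∑' k : ℕ, ENNReal.ofReal
              ((1 + ((k : ℝ) + 1) ^ 2 + (n₂.1 : ℝ) ^ 2 + (n₂.2 : ℝ) ^ 2) ^ (α + β + δ) *
                (c (k, n₂)) ^ 2) := by
      intro n₂
      have hrw : ∀ τ, W τ * ENNReal.ofReal (wβ n₂ * (g n₂ τ) ^ 2)
          = ENNReal.ofReal (wβ n₂) * (W τ * ENNReal.ofReal ((g n₂ τ) ^ 2)) := by
        intro τ
        rw [ENNReal.ofReal_mul (hwβ0 n₂)]
        ring
      calc (∫⁻ τ in Set.Ioo (0 : ℝ) L, W τ * ENNReal.ofReal (wβ n₂ * (g n₂ τ) ^ 2))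
          = ENNReal.ofReal (wβ n₂) *
              ∫⁻ τ in Set.Ioo (0 : ℝ) L, W τ * ENNReal.ofReal ((g n₂ τ) ^ 2) := by
            rw [← lintegral_const_mul' _ _ ENNReal.ofReal_ne_top]
            exact lintegral_congr hrw
        _ ≤ ENNReal.ofReal (wβ n₂) * (ENNReal.ofReal C *
              ∑' k : ℕ, ENNReal.ofReal ((1+((k:ℝ)+1)^2)^σ * (c (k, n₂))^2)) :=
            mul_le_mul_right (hbound (fun k => c (k, n₂))) _
        _ = ENNReal.ofReal C * ∑' k : ℕ, ENNReal.ofReal (wβ n₂) *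
              ENNReal.ofReal ((1+((k:ℝ)+1)^2)^σ * (c (k, n₂))^2) := by
            rw [ENNReal.tsum_mul_left]
            ring
        _ ≤ ENNReal.ofReal C * ∑' k : ℕ, ENNReal.ofReal
              ((1 + ((k : ℝ) + 1) ^ 2 + (n₂.1 : ℝ) ^ 2 + (n₂.2 : ℝ) ^ 2) ^ (α + β + δ) *
                (c (k, n₂)) ^ 2) := by
            apply mul_le_mul_right
            apply ENNReal.tsum_le_tsum
            intro k
            rw [← ENNReal.ofReal_mul (hwβ0 n₂)]
            apply ENNReal.ofReal_le_ofReal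
            set M : ℝ := 1 + ((k : ℝ) + 1) ^ 2 + (n₂.1 : ℝ) ^ 2 + (n₂.2 : ℝ) ^ 2 with hMdef
            have hM1 : (1:ℝ) ≤ M := by
              rw [hMdef]
              have := sq_nonneg ((k:ℝ)+1)
              have := sq_nonneg ((n₂.1:ℝ))
              have := sq_nonneg ((n₂.2:ℝ))
              linarith
            have hM0 : (0:ℝ) < M := by linarith
            have h1 : wβ n₂ ≤ M ^ β := by
              rw [hwβdef]
              apply Real.rpow_le_rpow (by positivity) _ hβ.le
              rw [hMdef]
              have := sq_nonneg ((k:ℝ)+1)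
              linarith
            have h2 : (1+((k:ℝ)+1)^2)^σ ≤ M ^ σ := by
              apply Real.rpow_le_rpow (by positivity) _ (by rw [hσdef]; linarith)
              rw [hMdef]
              have := sq_nonneg ((n₂.1:ℝ))
              have := sq_nonneg ((n₂.2:ℝ))
              linarith
            calc wβ n₂ * ((1+((k:ℝ)+1)^2)^σ * (c (k, n₂))^2)
                = (wβ n₂ * (1+((k:ℝ)+1)^2)^σ) * (c (k, n₂))^2 := by ring
              _ ≤ (M ^ β * M ^ σ) * (c (k, n₂))^2 := by
                  apply mul_le_mul_of_nonneg_right _ (sq_nonneg _)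
                  exact mul_le_mul h1 h2 (Real.rpow_nonneg (by positivity) _)
                    (Real.rpow_nonneg hM0.le _)
              _ = M ^ (β + σ) * (c (k, n₂))^2 := by rw [← Real.rpow_add hM0]
              _ ≤ M ^ (α + β + δ) * (c (k, n₂))^2 := by
                  apply mul_le_mul_of_nonneg_right _ (sq_nonneg _)
                  apply Real.rpow_le_rpow_of_exponent_le hM1
                  rw [hσdef]; linarith
    calc (∑' n₂ : ℤ × ℤ, ∫⁻ τ in Set.Ioo (0 : ℝ) L,
            W τ * ENNReal.ofReal (wβ n₂ * (g n₂ τ) ^ 2))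
        ≤ ∑' n₂ : ℤ × ℤ, ENNReal.ofReal C * ∑' k : ℕ, ENNReal.ofReal
            ((1 + ((k : ℝ) + 1) ^ 2 + (n₂.1 : ℝ) ^ 2 + (n₂.2 : ℝ) ^ 2) ^ (α + β + δ) *
              (c (k, n₂)) ^ 2) := ENNReal.tsum_le_tsum hslice
      _ = ENNReal.ofReal C * ∑' n₂ : ℤ × ℤ, ∑' k : ℕ, ENNReal.ofReal
            ((1 + ((k : ℝ) + 1) ^ 2 + (n₂.1 : ℝ) ^ 2 + (n₂.2 : ℝ) ^ 2) ^ (α + β + δ) *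
              (c (k, n₂)) ^ 2) := ENNReal.tsum_mul_left
      _ = ENNReal.ofReal C *
            ∑' n : ℕ × ℤ × ℤ,
              ENNReal.ofReal
                ((1 + ((n.1 : ℝ) + 1) ^ 2 + (n.2.1 : ℝ) ^ 2 + (n.2.2 : ℝ) ^ 2) ^ (α + β + δ) *
                  c n ^ 2) := by
          congr 1
          calc (∑' n₂ : ℤ × ℤ, ∑' k : ℕ, ENNReal.ofReal
                ((1 + ((k : ℝ) + 1) ^ 2 + (n₂.1 : ℝ) ^ 2 + (n₂.2 : ℝ) ^ 2) ^ (α + β + δ) *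
                  (c (k, n₂)) ^ 2))
              = ∑' k : ℕ, ∑' n₂ : ℤ × ℤ, ENNReal.ofReal
                ((1 + ((k : ℝ) + 1) ^ 2 + (n₂.1 : ℝ) ^ 2 + (n₂.2 : ℝ) ^ 2) ^ (α + β + δ) *
                  (c (k, n₂)) ^ 2) := ENNReal.tsum_comm
            _ = ∑' n : ℕ × ℤ × ℤ,
                ENNReal.ofReal
                  ((1 + ((n.1 : ℝ) + 1) ^ 2 + (n.2.1 : ℝ) ^ 2 + (n.2.2 : ℝ) ^ 2) ^ (α + β + δ) *
                    c n ^ 2) :=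
              (ENNReal.tsum_prod' (f := fun n : ℕ × ℤ × ℤ =>
                ENNReal.ofReal
                  ((1 + ((n.1 : ℝ) + 1) ^ 2 + (n.2.1 : ℝ) ^ 2 + (n.2.2 : ℝ) ^ 2) ^ (α + β + δ) *
                    c n ^ 2))).symm
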